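/- Let k ≥ 4 and for each m with 0 ≤ m ≤ P_k − 1 let S_k^{(m)} be the set of natural numbers N with 5 + m·∏_{i=1}^{k−1} P_i ≤ N ≤ 4 + (m+1)·∏_{i=1}^{k−1} P_i. Then every subset S_k^{(m)} contains at least ∏_{i=2}^{k−1} (P_i − 2) − 2·∏_{i=2}^{k−2} (P_i − 2) natural numbers N such that N and N+2 both lie in S_k^{(m)} and both are coprime to ∏_{i=1}^{k} P_i. -/

import Mathlib

/-- `P i` is the `i`-th prime number (1-indexed): `P 1 = 2`, `P 2 = 3`, `P 3 = 5`, ... -/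
noncomputable def P (i : ℕ) : ℕ := Nat.nth Nat.Prime (i - 1)

/-- The `k`-th primorial, `∏_{i=1}^{k} P_i`. -/
noncomputable def primor (k : ℕ) : ℕ := ∏ i ∈ Finset.Icc 1 k, P i

/-!
Let `Q = P_1 ⋯ P_{k-1}`, `q = P_1 ⋯ P_{k-2}` and `p = P_k`. The block has length `Q`, so it meets
every residue class mod `Q` once, and by the Chinese remainder theorem exactly
`∏_{i=2}^{k-1} (P_i - 2)` of its elements `N` have `N` and `N + 2` coprime to `Q`: each odd prime
excludes two residues, `2` excludes one. Those that are not coprime to `pQ` have `p ∣ N` or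
`p ∣ N + 2`. Since `Q < pq`, each of these two classes lies in an interval of length `pq`, where it
is one residue class mod `p` crossed with the twin-coprime classes mod `q`; so each has at most
`∏_{i=2}^{k-2} (P_i - 2)` elements. Finally `N + 2` stays in the block because its last two
elements `3 + (m + 1)Q` and `4 + (m + 1)Q` are divisible by `3` and by `2`.
-/

open Finset

def IsTwinUnit {R : Type*} [Semiring R] (x : R) : Prop := IsUnit x ∧ IsUnit (x + 2)

-- `twinCount (primor j)` is the paper's `n_j^t`.
noncomputable def twinCount (n : ℕ) : ℕ := Nat.card {x : ZMod n // IsTwinUnit x}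

theorem ZMod.isTwinUnit_natCast_iff {n N : ℕ} :
    IsTwinUnit (N : ZMod n) ↔ N.Coprime n ∧ (N + 2).Coprime n := by
  rw [IsTwinUnit, ← ZMod.isUnit_iff_coprime, ← ZMod.isUnit_iff_coprime, Nat.cast_add,
    Nat.cast_ofNat]

theorem card_filter_Ico_natCast (a n : ℕ) [NeZero n] (R : ZMod n → Prop) [DecidablePred R] :
    #{N ∈ Ico a (a + n) | R (N : ℕ)} = Nat.card {x // R x} := by
  rw [Nat.filter_Ico_card_eq_of_periodic _ _ _ fun N => by simp, Nat.count_eq_card_filter_range,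
    Nat.card_eq_fintype_card, Fintype.card_subtype]
  refine card_nbij' Nat.cast ZMod.val ?_ ?_ ?_ ?_ <;> intro x hx <;>
    simp_all [ZMod.val_lt, ZMod.val_natCast, Nat.mod_eq_of_lt]

theorem card_filter_Ico_natCast_and {p q : ℕ} [NeZero p] [NeZero q] (h : p.Coprime q) (a : ℕ)
    (R : ZMod p → Prop) (S : ZMod q → Prop) [DecidablePred R] [DecidablePred S] :
    #{N ∈ Ico a (a + p * q) | R (N : ℕ) ∧ S (N : ℕ)} =
      Nat.card {x // R x} * Nat.card {y // S y} := by
  let e := ZMod.chineseRemainder h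
  have he (N : ℕ) : e N = ((N : ZMod p), (N : ZMod q)) := Prod.ext (by simp [e]) (by simp [e])
  rw [← Nat.card_prod, ← Nat.card_congr Equiv.subtypeProdEquivProd,
    ← Nat.card_congr
      (e.toEquiv.subtypeEquiv (p := fun x => R (e x).1 ∧ S (e x).2) fun _ => Iff.rfl),
    ← card_filter_Ico_natCast a]
  simp only [he]

theorem card_filter_Ico_coprime_twin (a n : ℕ) [NeZero n] :
    #{N ∈ Ico a (a + n) | N.Coprime n ∧ (N + 2).Coprime n} = twinCount n := by
  classical
  rw [twinCount]
  convert card_filter_Ico_natCast a n IsTwinUnit using 4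
  exact ZMod.isTwinUnit_natCast_iff.symm

theorem twinCount_mul {p q : ℕ} [NeZero p] [NeZero q] (h : p.Coprime q) :
    twinCount (p * q) = twinCount p * twinCount q := by
  classical
  rw [← card_filter_Ico_coprime_twin 0, twinCount, twinCount,
    ← card_filter_Ico_natCast_and h 0 IsTwinUnit IsTwinUnit]
  simp only [ZMod.isTwinUnit_natCast_iff, Nat.coprime_mul_iff_right, and_and_and_comm]

theorem card_filter_Ico_dvd_add_coprime_twin {p q : ℕ} [NeZero p] [NeZero q] (h : p.Coprime q)
    (a c : ℕ) :
    #{N ∈ Ico a (a + p * q) | p ∣ N + c ∧ N.Coprime q ∧ (N + 2).Coprime q} = twinCount q := by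
  classical
  have hR : Nat.card {x : ZMod p // x + c = 0} = 1 := by
    simp only [add_eq_zero_iff_eq_neg, Nat.card_unique]
  rw [twinCount, ← one_mul (Nat.card _), ← hR, ← card_filter_Ico_natCast_and h a]
  simp only [ZMod.isTwinUnit_natCast_iff, ← Nat.cast_add, ZMod.natCast_eq_zero_iff]

theorem ZMod.setOf_isTwinUnit {p : ℕ} [Fact p.Prime] :
    {x : ZMod p | IsTwinUnit x} = ({0, -2} : Set (ZMod p))ᶜ := by
  ext x
  simp [IsTwinUnit, add_eq_zero_iff_eq_neg]

theorem twinCount_two : twinCount 2 = 1 := by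
  change Nat.card {x : ZMod 2 | IsTwinUnit x} = 1
  rw [Nat.card_coe_set_eq, ZMod.setOf_isTwinUnit, show (-2 : ZMod 2) = 0 from rfl,
    Set.pair_eq_singleton, Set.ncard_compl, Set.ncard_singleton, Nat.card_zmod]

theorem twinCount_prime {p : ℕ} [Fact p.Prime] (hp : p ≠ 2) : twinCount p = p - 2 := by
  have h2 : (0 : ZMod p) ≠ -2 := by
    rw [ne_comm, neg_ne_zero, ← Nat.cast_ofNat, ne_eq, ZMod.natCast_eq_zero_iff]
    exact fun hdvd => hp ((Nat.prime_dvd_prime_iff_eq Fact.out Nat.prime_two).mp hdvd)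
  change Nat.card {x : ZMod p | IsTwinUnit x} = p - 2
  rw [Nat.card_coe_set_eq, ZMod.setOf_isTwinUnit, Set.ncard_compl,
    Set.ncard_pair h2, Nat.card_zmod]

theorem P_prime (i : ℕ) : (P i).Prime := Nat.prime_nth_prime _

instance (i : ℕ) : Fact (P i).Prime := ⟨P_prime i⟩

instance (i : ℕ) : NeZero (P i) := ⟨(P_prime i).ne_zero⟩

theorem P_one : P 1 = 2 := Nat.nth_prime_zero_eq_two

theorem P_two : P 2 = 3 := Nat.nth_prime_one_eq_three

theorem P_lt_P {i j : ℕ} (hi : 1 ≤ i) (hij : i < j) : P i < P j :=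
  Nat.nth_strictMono Nat.infinite_setOfPred_prime (by omega)

theorem primor_succ (k : ℕ) : primor (k + 1) = primor k * P (k + 1) :=
  prod_Icc_succ_top (by omega) _

instance (k : ℕ) : NeZero (primor k) := ⟨(prod_pos fun i _ => (P_prime i).pos).ne'⟩

theorem P_dvd_primor {i k : ℕ} (h1 : 1 ≤ i) (h2 : i ≤ k) : P i ∣ primor k :=
  dvd_prod_of_mem _ (mem_Icc.2 ⟨h1, h2⟩)

theorem coprime_P_primor {i j : ℕ} (hj : j < i) : (P i).Coprime (primor j) :=
  Nat.Coprime.prod_right fun t ht =>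
    (Nat.coprime_primes (P_prime i) (P_prime t)).2 (P_lt_P (mem_Icc.1 ht).1 (by grind)).ne'

theorem six_dvd_primor {k : ℕ} (hk : 2 ≤ k) : 6 ∣ primor k :=
  Nat.Coprime.mul_dvd_of_dvd_of_dvd (by norm_num) (P_one ▸ P_dvd_primor le_rfl (by omega))
    (P_two ▸ P_dvd_primor (by norm_num) hk)

theorem twinCount_primor {j : ℕ} (hj : 1 ≤ j) :
    twinCount (primor j) = ∏ i ∈ Icc 2 j, (P i - 2) := by
  induction j, hj using Nat.le_induction with
  | base => rw [primor, Icc_self, prod_singleton, P_one, twinCount_two]; rfl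
  | succ j hj ih =>
    have hP : P (j + 1) ≠ 2 := P_one ▸ (P_lt_P le_rfl (by omega)).ne'
    rw [primor_succ, twinCount_mul (coprime_P_primor (by omega)).symm, ih, twinCount_prime hP,
      prod_Icc_succ_top (by omega)]

theorem card_filter_Ico_dvd_add_coprime_twin_le {p q L : ℕ} [NeZero p] [NeZero q]
    (h : p.Coprime q) (hL : L ≤ p * q) (a c : ℕ) :
    #{N ∈ Ico a (a + L) | p ∣ N + c ∧ N.Coprime q ∧ (N + 2).Coprime q} ≤ twinCount q :=
  card_filter_Ico_dvd_add_coprime_twin h a c ▸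
    card_le_card (filter_subset_filter _ (Ico_subset_Ico_right (by omega)))

theorem card_filter_coprime_twin_le (s : Finset ℕ) {p q r : ℕ} (hp : p.Prime) (hr : r ∣ q) :
    #{N ∈ s | N.Coprime q ∧ (N + 2).Coprime q} ≤
      #{N ∈ s | N.Coprime (q * p) ∧ (N + 2).Coprime (q * p)} +
      #{N ∈ s | p ∣ N ∧ N.Coprime r ∧ (N + 2).Coprime r} +
      #{N ∈ s | p ∣ N + 2 ∧ N.Coprime r ∧ (N + 2).Coprime r} := by
  refine (card_le_card fun N hN => ?_).trans
    ((card_union_le _ _).trans (Nat.add_le_add_right (card_union_le _ _) _))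
  simp only [mem_union, mem_filter] at hN ⊢
  obtain ⟨hs, h0, h2⟩ := hN
  by_cases hp0 : p ∣ N
  · exact .inl (.inr ⟨hs, hp0, h0.coprime_dvd_right hr, h2.coprime_dvd_right hr⟩)
  by_cases hp2 : p ∣ N + 2
  · exact .inr ⟨hs, hp2, h0.coprime_dvd_right hr, h2.coprime_dvd_right hr⟩
  exact .inl (.inl ⟨hs, h0.mul_right (hp.coprime_iff_not_dvd.2 hp0).symm,
    h2.mul_right (hp.coprime_iff_not_dvd.2 hp2).symm⟩)

theorem filter_coprime_twin_subset_add_two_mem {a b M : ℕ} (hM : 6 ∣ M) (hb : 6 ∣ b + 1) :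
    {N ∈ Ico a b | N.Coprime M ∧ (N + 2).Coprime M} ⊆
      {N ∈ Ico a b | N + 2 ∈ Ico a b ∧ N.Coprime M ∧ (N + 2).Coprime M} := by
  intro N hN
  simp only [mem_filter, mem_Ico] at hN ⊢
  refine ⟨hN.1, ⟨by omega, ?_⟩, hN.2⟩
  by_contra! hle
  -- `N` is `b - 2 ≡ 3` or `b - 1 ≡ 4` modulo 6
  rcases show 3 ∣ N ∧ 3 ∣ M ∨ 2 ∣ N ∧ 2 ∣ M by omega with ⟨hN', hM'⟩ | ⟨hN', hM'⟩ <;>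
    exact Nat.not_coprime_of_dvd_of_dvd (by norm_num) hN' hM' hN.2.1

open scoped Classical in
theorem prospective_twin_primes_in_each_block_general (k : ℕ) (hk : 4 ≤ k) (m : ℕ) :
    ((Finset.Icc (5 + m * primor (k - 1)) (4 + (m + 1) * primor (k - 1))).filter
      (fun N => N + 2 ∈ Finset.Icc (5 + m * primor (k - 1)) (4 + (m + 1) * primor (k - 1)) ∧
        Nat.Coprime N (primor k) ∧ Nat.Coprime (N + 2) (primor k))).card
      ≥ ∏ i ∈ Finset.Icc 2 (k - 1), (P i - 2)
        - 2 * ∏ i ∈ Finset.Icc 2 (k - 2), (P i - 2) := by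
  obtain ⟨n, rfl⟩ : ∃ n, k = n + 2 := ⟨k - 2, by omega⟩
  rw [show n + 2 - 1 = n + 1 by omega, show n + 2 - 2 = n by omega]
  set Q := primor (n + 1)
  set q := primor n
  have hQ : Q = q * P (n + 1) := primor_succ n
  have hM : primor (n + 2) = Q * P (n + 2) := primor_succ (n + 1)
  have hblock : Icc (5 + m * Q) (4 + (m + 1) * Q) = Ico (5 + m * Q) (5 + m * Q + Q) := by
    rw [← Ico_add_one_right_eq_Icc]
    congr 1
    ring
  have hend : 6 ∣ 5 + m * Q + Q + 1 := by
    rw [show 5 + m * Q + Q + 1 = 6 + (m + 1) * Q by ring]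
    exact dvd_add dvd_rfl ((six_dvd_primor (by omega)).mul_left _)
  have hQp : Q ≤ P (n + 2) * q := by
    rw [hQ, mul_comm]
    exact Nat.mul_le_mul_right q (P_lt_P (by omega) (by omega)).le
  have hbad (c : ℕ) := card_filter_Ico_dvd_add_coprime_twin_le (q := q)
    (coprime_P_primor (show n < n + 2 by omega)) hQp (5 + m * Q) c
  rw [twinCount_primor (show 1 ≤ n by omega)] at hbad
  have h0 := hbad 0
  have h2 := hbad 2
  simp only [add_zero] at h0
  have hsieve := card_filter_coprime_twin_le (Ico (5 + m * Q) (5 + m * Q + Q)) (P_prime (n + 2))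
    (hQ ▸ dvd_mul_right q _)
  rw [card_filter_Ico_coprime_twin, twinCount_primor (by omega), ← hM] at hsieve
  have hgood := card_le_card (filter_coprime_twin_subset_add_two_mem (a := 5 + m * Q)
    (six_dvd_primor (show 2 ≤ n + 2 by omega)) hend)
  rw [hblock]
  omega

open scoped Classical in
/-- For `k ≥ 4`, every block
`S_k^{(m)} = [5 + m·∏_{i=1}^{k-1} P_i, 4 + (m+1)·∏_{i=1}^{k-1} P_i]`, `0 ≤ m ≤ P_k - 1`,
contains at least `∏_{i=2}^{k-1}(P_i - 2) - 2·∏_{i=2}^{k-2}(P_i - 2)` naturals `N` with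
`N` and `N+2` both in the block and both coprime to `∏_{i=1}^k P_i`. -/
theorem prospective_twin_primes_in_each_block (k : ℕ) (hk : 4 ≤ k)
    (m : ℕ) (hm : m ≤ P k - 1) :
    ((Finset.Icc (5 + m * primor (k - 1)) (4 + (m + 1) * primor (k - 1))).filter
      (fun N => N + 2 ∈ Finset.Icc (5 + m * primor (k - 1)) (4 + (m + 1) * primor (k - 1)) ∧
        Nat.Coprime N (primor k) ∧ Nat.Coprime (N + 2) (primor k))).card
      ≥ ∏ i ∈ Finset.Icc 2 (k - 1), (P i - 2)
        - 2 * ∏ i ∈ Finset.Icc 2 (k - 2), (P i - 2) :=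
  prospective_twin_primes_in_each_block_general k hk m
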